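/- Assume condition (B) holds, that L_{i+1} = [L_i, L_1] for all i > 0, that r ≥ q, that L_{−q} is an irreducible L_0-module, and that [L_{−q}, L_{q−1}] = L_{−1}. Assume further the following two implications: (H12) for every i with 0 < i ≤ q/2 and every L_0-submodule V of L_{−q+i} satisfying [V, L_{q−i−1}] = 0 and [V, [V, L_{q−i}]] = 0, if L_{−q+i−1} is an irreducible L_0-module and [L_{−q+i−1}, L_{q−i}] ≠ 0, then V = 0; and (H13) for every i with 0 < i < (q−1)/2 and every irreducible L_0-submodule V of L_{−q+i} with [V, L_{q−i−1}] ≠ 0, one has L_{−q+i} = V. Then for every integer i with 0 ≤ i < (q−1)/2: L_{−q+i} is an irreducible L_0-module, and every nonzero irreducible L_0-submodule V of L_{−q+i} satisfies [V, L_{q−(i+1)}] = L_{−1}. (Lemma 2.18; hypotheses (H12) and (H13) are the conclusions of the cited Lemmas 2.12 and 2.13.) -/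
import Mathlib

set_option linter.unusedSectionVars false
set_option linter.unusedVariables false

/- Graded Lie algebra setting: `F` a field of characteristic 3, `A` a
finite-dimensional Lie algebra over `F`, with a `ℤ`-grading `L : ℤ → Submodule F A`. -/

namespace GradedLie

variable {F A : Type*} [Field F] [CharP F 3] [LieRing A] [LieAlgebra F A]

/-- The linear span of all brackets `⁅u, v⁆` with `u ∈ U`, `v ∈ V`. -/
def bSpan (U V : Submodule F A) : Submodule F A :=
  Submodule.span F {z | ∃ u ∈ U, ∃ v ∈ V, z = ⁅u, v⁆}

/-- `M` is an irreducible `L0`-module under the adjoint action: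
`M ≠ 0` and the only `L0`-submodules of `M` are `0` and `M`. -/
def IsIrred (L0 M : Submodule F A) : Prop :=
  M ≠ ⊥ ∧ ∀ V ≤ M, bSpan L0 V ≤ V → V = ⊥ ∨ V = M

/-- `V` is an irreducible `L0`-submodule: nonzero, `L0`-stable, and with no
`L0`-submodules other than `⊥` and itself. -/
def IsIrredSub (L0 V : Submodule F A) : Prop :=
  V ≠ ⊥ ∧ bSpan L0 V ≤ V ∧ ∀ W ≤ V, bSpan L0 W ≤ W → W = ⊥ ∨ W = V

lemma lie_mem_bSpan {U V : Submodule F A} {u v : A} (hu : u ∈ U) (hv : v ∈ V) :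
    ⁅u, v⁆ ∈ bSpan U V :=
  Submodule.subset_span ⟨u, hu, v, hv, rfl⟩

lemma bSpan_le {U V W : Submodule F A} (h : ∀ u ∈ U, ∀ v ∈ V, ⁅u, v⁆ ∈ W) :
    bSpan U V ≤ W := by
  apply Submodule.span_le.2
  rintro z ⟨u, hu, v, hv, rfl⟩
  exact h u hu v hv

lemma bSpan_mono {U U' V V' : Submodule F A} (hU : U ≤ U') (hV : V ≤ V') :
    bSpan U V ≤ bSpan U' V' :=
  bSpan_le fun u hu v hv => lie_mem_bSpan (hU hu) (hV hv)

lemma bSpan_bot_right (U : Submodule F A) : bSpan U ⊥ = ⊥ :=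
  le_bot_iff.1 (bSpan_le fun u _ v hv => by
    rw [Submodule.mem_bot] at hv ⊢; rw [hv, lie_zero])

lemma bSpan_bot_left (V : Submodule F A) : bSpan ⊥ V = ⊥ :=
  le_bot_iff.1 (bSpan_le fun u hu v _ => by
    rw [Submodule.mem_bot] at hu ⊢; rw [hu, zero_lie])

/-- Leibniz rule for bracket spans. -/
lemma bSpan_bSpan_le (U W X : Submodule F A) :
    bSpan U (bSpan W X) ≤ bSpan (bSpan U W) X ⊔ bSpan W (bSpan U X) := by
  apply bSpan_le
  intro u hu y hy
  induction hy using Submodule.span_induction with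
  | mem z hz =>
      obtain ⟨w, hw, x, hx, rfl⟩ := hz
      have : ⁅u, ⁅w, x⁆⁆ = ⁅⁅u, w⁆, x⁆ + ⁅w, ⁅u, x⁆⁆ := leibniz_lie u w x
      rw [this]
      exact add_mem
        (Submodule.mem_sup_left (lie_mem_bSpan (lie_mem_bSpan hu hw) hx))
        (Submodule.mem_sup_right (lie_mem_bSpan hw (lie_mem_bSpan hu hx)))
  | zero => rw [lie_zero]; exact zero_mem _
  | add a b _ _ ha hb => rw [lie_add]; exact add_mem ha hb
  | smul c a _ ha => rw [lie_smul]; exact Submodule.smul_mem _ c ha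

/-- If `U` and `V` are `L0`-stable, so is `[U, V]`. -/
lemma bSpan_stable {L0 U V : Submodule F A} (hU : bSpan L0 U ≤ U) (hV : bSpan L0 V ≤ V) :
    bSpan L0 (bSpan U V) ≤ bSpan U V :=
  (bSpan_bSpan_le L0 U V).trans (sup_le (bSpan_mono hU le_rfl) (bSpan_mono le_rfl hV))

/-- In a finite-dimensional algebra, any nonzero `L0`-stable submodule contains
an irreducible `L0`-submodule. -/
lemma exists_irredSub [FiniteDimensional F A] (L0 V : Submodule F A)
    (hV : V ≠ ⊥) (hst : bSpan L0 V ≤ V) :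
    ∃ W, W ≤ V ∧ IsIrredSub L0 W := by
  have hwf : WellFounded ((· < ·) : Submodule F A → Submodule F A → Prop) :=
    (inferInstance : WellFoundedLT (Submodule F A)).wf
  obtain ⟨W, hWS, hmin⟩ := hwf.has_min
    {W : Submodule F A | W ≤ V ∧ W ≠ ⊥ ∧ bSpan L0 W ≤ W} ⟨V, le_rfl, hV, hst⟩
  refine ⟨W, hWS.1, hWS.2.1, hWS.2.2, ?_⟩
  intro W' hW' hst'
  by_cases h0 : W' = ⊥
  · exact Or.inl h0
  · right
    have : W' ∈ {W : Submodule F A | W ≤ V ∧ W ≠ ⊥ ∧ bSpan L0 W ≤ W} :=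
      ⟨hW'.trans hWS.1, h0, hst'⟩
    have hnlt := hmin W' this
    rcases hW'.lt_or_eq with h | h
    · exact absurd h hnlt
    · exact h

/-- If `[U, L 1] = ⊥` then `[U, L j] = ⊥` for all `j ≥ 1` (positive part
generated by `L 1`). -/
lemma bSpan_gen_vanish {L : ℤ → Submodule F A}
    (hgen : ∀ i : ℤ, 0 < i → L (i + 1) = bSpan (L i) (L 1))
    (U : Submodule F A) (h1 : bSpan U (L 1) = ⊥) :
    ∀ j : ℤ, 1 ≤ j → bSpan U (L j) = ⊥ := by
  refine Int.le_induction h1 ?_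
  intro n hn ih
  rw [hgen n (by omega)]
  have h := bSpan_bSpan_le U (L n) (L 1)
  rw [ih, h1, bSpan_bot_left, bSpan_bot_right, sup_idem] at h
  exact le_bot_iff.1 h

/-- Lemma 2.18. -/
theorem lemma_2_18
    [FiniteDimensional F A]
    (L : ℤ → Submodule F A)
    (hdecomp : DirectSum.IsInternal L)
    (hgrade : ∀ i j : ℤ, ∀ x ∈ L i, ∀ y ∈ L j, ⁅x, y⁆ ∈ L (i + j))
    (q r : ℤ) (hq : 1 ≤ q) (hr : 1 ≤ r)
    (hbound : ∀ i : ℤ, i < -q ∨ r < i → L i = ⊥)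
    (hbot : L (-q) ≠ ⊥)
    (hB : IsIrred (L 0) (L (-1)))
    (hgen : ∀ i : ℤ, 0 < i → L (i + 1) = bSpan (L i) (L 1))
    (hrq : q ≤ r)
    (hirr : IsIrred (L 0) (L (-q)))
    (hq1 : bSpan (L (-q)) (L (q - 1)) = L (-1))
    (H12 : ∀ i : ℤ, 0 < i → 2 * i ≤ q →
      ∀ V : Submodule F A, V ≤ L (-q + i) → bSpan (L 0) V ≤ V →
        bSpan V (L (q - i - 1)) = ⊥ →
        bSpan V (bSpan V (L (q - i))) = ⊥ →
        IsIrred (L 0) (L (-q + i - 1)) →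
        bSpan (L (-q + i - 1)) (L (q - i)) ≠ ⊥ →
        V = ⊥)
    (H13 : ∀ i : ℤ, 0 < i → 2 * i < q - 1 →
      ∀ V : Submodule F A, V ≤ L (-q + i) → IsIrredSub (L 0) V →
        bSpan V (L (q - i - 1)) ≠ ⊥ →
        L (-q + i) = V) :
    ∀ i : ℤ, 0 ≤ i → 2 * i < q - 1 →
      IsIrred (L 0) (L (-q + i)) ∧
      ∀ V : Submodule F A, V ≤ L (-q + i) → IsIrredSub (L 0) V →
        bSpan V (L (q - (i + 1))) = L (-1) := by
  have hLeq : ∀ a b : ℤ, a = b → L a = L b := fun a b h => by rw [h]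
  have hgr : ∀ (k l : ℤ) (U V : Submodule F A), U ≤ L k → V ≤ L l →
      bSpan U V ≤ L (k + l) :=
    fun k l U V hU hV => bSpan_le fun u hu v hv => hgrade k l u (hU hu) v (hV hv)
  have hstab : ∀ k : ℤ, bSpan (L 0) (L k) ≤ L k := by
    intro k
    have := hgr 0 k (L 0) (L k) le_rfl le_rfl
    rwa [hLeq (0 + k) k (by ring)] at this
  refine Int.le_induction ?_ ?_
  · intro h2
    rw [hLeq (-q + 0) (-q) (by ring), hLeq (q - (0 + 1)) (q - 1) (by ring)]
    refine ⟨hirr, ?_⟩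
    intro V hV hVirr
    have hVeq : V = L (-q) := (hirr.2 V hV hVirr.2.1).resolve_left hVirr.1
    rw [hVeq]; exact hq1
  · intro i hi ih h2
    obtain ⟨hIrr, hBr⟩ := ih (by omega)
    have hLiSub : IsIrredSub (L 0) (L (-q + i)) := ⟨hIrr.1, hstab _, hIrr.2⟩
    have hLi : bSpan (L (-q + i)) (L (q - (i + 1))) = L (-1) :=
      hBr (L (-q + i)) le_rfl hLiSub
    -- Step 1: L (-q + (i+1)) ≠ ⊥
    have hne : L (-q + (i + 1)) ≠ ⊥ := by
      intro h0
      have h1 : bSpan (L (-q + i)) (L 1) = ⊥ := by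
        have h := hgr (-q + i) 1 (L (-q + i)) (L 1) le_rfl le_rfl
        rw [hLeq (-q + i + 1) (-q + (i + 1)) (by ring), h0] at h
        exact le_bot_iff.1 h
      have h := bSpan_gen_vanish hgen (L (-q + i)) h1 (q - (i + 1)) (by omega)
      exact hB.1 (hLi.symm.trans h)
    -- Step 2: key claim
    have key : ∀ V : Submodule F A, V ≤ L (-q + (i + 1)) → IsIrredSub (L 0) V →
        bSpan V (L (q - (i + 1) - 1)) ≠ ⊥ := by
      intro V hV hVirr hcontra
      apply hVirr.1
      refine H12 (i + 1) (by omega) (by omega) V hV hVirr.2.1 hcontra ?_ ?_ ?_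
      · -- bSpan V (bSpan V (L (q - (i+1)))) = ⊥
        rw [hLeq (q - (i + 1) - 1) (q - i - 2) (by ring)] at hcontra
        rw [hLeq (q - (i + 1)) ((q - i - 2) + 1) (by ring), hgen (q - i - 2) (by omega)]
        have t2 : bSpan V (bSpan V (bSpan (L (q - i - 2)) (L 1))) ≤
            bSpan V (bSpan (L (q - i - 2)) (bSpan V (L 1))) := by
          refine bSpan_mono le_rfl ?_
          have h := bSpan_bSpan_le V (L (q - i - 2)) (L 1)
          rwa [hcontra, bSpan_bot_left, bot_sup_eq] at h
        have t3 := bSpan_bSpan_le V (L (q - i - 2)) (bSpan V (L 1))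
        rw [hcontra, bSpan_bot_left, bot_sup_eq] at t3
        have u1 : bSpan V (L 1) ≤ L (-q + (i + 1) + 1) :=
          hgr _ _ _ _ hV le_rfl
        have u2 : bSpan V (bSpan V (L 1)) ≤ L ((-q + (i + 1)) + (-q + (i + 1) + 1)) :=
          hgr _ _ _ _ hV u1
        have u3 : L ((-q + (i + 1)) + (-q + (i + 1) + 1)) = ⊥ :=
          hbound _ (Or.inl (by omega))
        have u4 : bSpan V (bSpan V (L 1)) = ⊥ := le_bot_iff.1 (u3 ▸ u2)
        have t4 : bSpan (L (q - i - 2)) (bSpan V (bSpan V (L 1))) = ⊥ := by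
          rw [u4, bSpan_bot_right]
        exact le_bot_iff.1 ((t2.trans t3).trans_eq t4)
      · rw [hLeq (-q + (i + 1) - 1) (-q + i) (by ring)]
        exact hIrr
      · rw [hLeq (-q + (i + 1) - 1) (-q + i) (by ring), hLi]
        exact hB.1
    -- Step 3: the bracket conclusion for i+1
    have part2 : ∀ V : Submodule F A, V ≤ L (-q + (i + 1)) → IsIrredSub (L 0) V →
        bSpan V (L (q - (i + 1 + 1))) = L (-1) := by
      intro V hV hVirr
      rw [hLeq (q - (i + 1 + 1)) (q - (i + 1) - 1) (by ring)]
      have hW := key V hV hVirr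
      have hle : bSpan V (L (q - (i + 1) - 1)) ≤ L (-1) := by
        have h := hgr (-q + (i + 1)) (q - (i + 1) - 1) V (L (q - (i + 1) - 1)) hV le_rfl
        rwa [hLeq (-q + (i + 1) + (q - (i + 1) - 1)) (-1) (by ring)] at h
      have hstab' : bSpan (L 0) (bSpan V (L (q - (i + 1) - 1))) ≤
          bSpan V (L (q - (i + 1) - 1)) :=
        bSpan_stable hVirr.2.1 (hstab _)
      exact (hB.2 _ hle hstab').resolve_left hW
    refine ⟨⟨hne, ?_⟩, part2⟩
    -- Step 4: irreducibility of L (-q + (i+1))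
    intro V hV hVst
    by_cases h0 : V = ⊥
    · exact Or.inl h0
    right
    obtain ⟨W, hWV, hWirr⟩ := exists_irredSub (L 0) V h0 hVst
    have hWL : W ≤ L (-q + (i + 1)) := hWV.trans hV
    have heq : L (-q + (i + 1)) = W :=
      H13 (i + 1) (by omega) (by omega) W hWL hWirr (key W hWL hWirr)
    exact le_antisymm hV (by rw [heq]; exact hWV)

end GradedLie
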